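/- Suppose M is an (FP)_∞ R-module and x ∈ R is a non-zero-divisor on both R and M. Then M/xM is (FP)_∞ as an R/(x)-module. -/
import Mathlib


open CategoryTheory Opposite TensorProduct

universe u

namespace AB

/-- `M` is `(FP)ₙ`: there is an exact sequence `Fₙ → ⋯ → F₀ → M → 0`
with each `Fᵢ` finitely generated free.  Equivalently (the form used here),
`(FP)₀` means finitely generated, and `M` is `(FP)_{n+1}` iff there is a
surjection from a finitely generated free module whose kernel is `(FP)ₙ`. -/
def IsFP (R : Type u) [CommRing R] : ℕ → ModuleCat.{u} R → Prop
  | 0, M => Module.Finite R M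
  | n + 1, M => ∃ (k : ℕ) (f : (Fin k → R) →ₗ[R] M), Function.Surjective f ∧
      IsFP R n (ModuleCat.of R (LinearMap.ker f))

/-- `M` is `(FP)_∞`. -/
def IsFPInf (R : Type u) [CommRing R] (M : ModuleCat.{u} R) : Prop := ∀ n, IsFP R n M

/-- `Ext^i_R(M, N)` as a type. -/
noncomputable abbrev ext (R : Type u) [CommRing R] (M N : ModuleCat.{u} R) (i : ℕ) :=
  ((Ext R (ModuleCat.{u} R) i).obj (op M)).obj N

/-- `Ext^i_R(M, N) = 0`. -/
def extZero (R : Type u) [CommRing R] (M N : ModuleCat.{u} R) (i : ℕ) : Prop :=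
  Subsingleton (ext R M N i)

/-- membership in the G-class `G(R)`. -/
def MemG (R : Type u) [CommRing R] (M : ModuleCat.{u} R) : Prop :=
  Module.Finite R M ∧ Module.IsReflexive R M ∧
    (∀ i > 0, extZero R M (ModuleCat.of R R) i) ∧
    (∀ i > 0, extZero R (ModuleCat.of R (Module.Dual R M)) (ModuleCat.of R R) i)

/-- membership in the restricted G-class `G̃(R)`. -/
def MemGtilde (R : Type u) [CommRing R] (M : ModuleCat.{u} R) : Prop :=
  MemG R M ∧ IsFPInf R M ∧ IsFPInf R (ModuleCat.of R (Module.Dual R M))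

/-- `Gdim_R M ≤ n`. -/
def GDimLe (R : Type u) [CommRing R] : ℕ → ModuleCat.{u} R → Prop
  | 0, M => MemG R M
  | n + 1, M => ∃ (G : ModuleCat.{u} R) (f : G →ₗ[R] M), MemG R G ∧ Function.Surjective f ∧
      GDimLe R n (ModuleCat.of R (LinearMap.ker f))

/-- `G̃dim_R M ≤ n`. -/
def GtildeDimLe (R : Type u) [CommRing R] : ℕ → ModuleCat.{u} R → Prop
  | 0, M => MemGtilde R M
  | n + 1, M => ∃ (G : ModuleCat.{u} R) (f : G →ₗ[R] M), MemGtilde R G ∧ Function.Surjective f ∧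
      GtildeDimLe R n (ModuleCat.of R (LinearMap.ker f))

/-- `pd_R M ≤ n`. -/
def ProjDimLe (R : Type u) [CommRing R] : ℕ → ModuleCat.{u} R → Prop
  | 0, M => Module.Projective R M
  | n + 1, M => ∃ (P : ModuleCat.{u} R) (f : P →ₗ[R] M), Module.Projective R P ∧
      Function.Surjective f ∧ ProjDimLe R n (ModuleCat.of R (LinearMap.ker f))

/-- The G-dimension of `M`, as an element of `ℕ∞` (`⊤` meaning `Gdim` is infinite/undefined). -/
noncomputable def GDim (R : Type u) [CommRing R] (M : ModuleCat.{u} R) : ℕ∞ :=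
  sInf {n : ℕ∞ | ∃ m : ℕ, n = m ∧ GDimLe R m M}

/-- The restricted G-dimension of `M`, as an element of `ℕ∞`. -/
noncomputable def GtildeDim (R : Type u) [CommRing R] (M : ModuleCat.{u} R) : ℕ∞ :=
  sInf {n : ℕ∞ | ∃ m : ℕ, n = m ∧ GtildeDimLe R m M}

/-- The projective dimension of `M`, as an element of `ℕ∞`. -/
noncomputable def ProjDim (R : Type u) [CommRing R] (M : ModuleCat.{u} R) : ℕ∞ :=
  sInf {n : ℕ∞ | ∃ m : ℕ, n = m ∧ ProjDimLe R m M}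

/-- The classical depth of `N` with respect to the ideal `I`: the supremum of the
lengths of regular sequences on `N` contained in `I`. -/
noncomputable def cdepth (S : Type u) [CommRing S] (I : Ideal S) (N : Type u)
    [AddCommGroup N] [Module S N] : ℕ∞ :=
  ⨆ rs : {l : List S // (∀ r ∈ l, r ∈ I) ∧ RingTheory.Sequence.IsRegular N l},
    (rs.1.length : ℕ∞)

/-- A bundled faithfully flat (commutative) algebra extension of `R`. -/
structure FFExt (R : Type u) [CommRing R] where
  S : Type u
  [ring : CommRing S]
  [alg : Algebra R S]
  faithfullyFlat : Module.FaithfullyFlat R S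

attribute [instance] FFExt.ring FFExt.alg

/-- The depth of a module `M` over a quasi-local ring `R`: the supremum, over all
faithfully flat extensions `S` of `R`, of the classical depth of `M ⊗_R S` with
respect to `mS`. -/
noncomputable def depth (R : Type u) [CommRing R] [IsLocalRing R] (M : Type u)
    [AddCommGroup M] [Module R M] : ℕ∞ :=
  ⨆ E : FFExt R,
    cdepth E.S (Ideal.map (algebraMap R E.S) (IsLocalRing.maximalIdeal R))
      (TensorProduct R E.S M)

end AB



section Aux
variable {R : Type u} [CommRing R]

theorem mem_xsmul {x : R} {A : Type u} [AddCommGroup A] [Module R A] (v : A) :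
    v ∈ (Ideal.span {x} • ⊤ : Submodule R A) ↔ ∃ a : A, x • a = v := by
  rw [Submodule.ideal_span_singleton_smul]
  constructor
  · intro h
    rcases Submodule.mem_map.mp h with ⟨a, -, ha⟩
    exact ⟨a, ha⟩
  · rintro ⟨a, rfl⟩
    exact Submodule.smul_mem_pointwise_smul a x ⊤ trivial

theorem isFP_congr (R : Type u) [CommRing R] :
    ∀ (n : ℕ) {M N : Type u} [AddCommGroup M] [Module R M] [AddCommGroup N] [Module R N]
      (e : M ≃ₗ[R] N), AB.IsFP R n (ModuleCat.of R M) → AB.IsFP R n (ModuleCat.of R N)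
  | 0, M, N, _, _, _, _, e, h => by
      simp only [AB.IsFP] at h ⊢
      haveI : Module.Finite R M := h
      exact Module.Finite.equiv e
  | n + 1, M, N, _, _, _, _, e, h => by
      simp only [AB.IsFP] at h ⊢
      obtain ⟨k, f, hf, hker⟩ := h
      refine ⟨k, e.toLinearMap.comp f, e.surjective.comp hf, ?_⟩
      have hk : LinearMap.ker (e.toLinearMap.comp f) = LinearMap.ker f := by
        rw [LinearMap.ker_comp, LinearEquiv.ker, Submodule.comap_bot]
      exact isFP_congr R n (LinearEquiv.ofEq _ _ hk.symm) hker
end Aux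

section Key
variable {R : Type u} [CommRing R]

/-- The induced `R⧸(x)`-linear map on quotients by `xA`. -/
noncomputable def barMap {x : R} {A B : Type u} [AddCommGroup A] [Module R A]
    [AddCommGroup B] [Module R B] (f : A →ₗ[R] B) :
    (A ⧸ (Ideal.span {x} • ⊤ : Submodule R A)) →ₗ[R ⧸ Ideal.span {x}]
      (B ⧸ (Ideal.span {x} • ⊤ : Submodule R B)) :=
  (Submodule.mapQ _ _ f (Submodule.smul_le.mpr fun r hr a _ => by
      simp only [Submodule.mem_comap, map_smul]
      exact Submodule.smul_mem_smul hr Submodule.mem_top)).extendScalarsOfSurjective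
    Ideal.Quotient.mk_surjective

@[simp] theorem barMap_mk {x : R} {A B : Type u} [AddCommGroup A] [Module R A]
    [AddCommGroup B] [Module R B] (f : A →ₗ[R] B) (a : A) :
    barMap (x := x) f (Submodule.Quotient.mk a) = Submodule.Quotient.mk (f a) := rfl

set_option maxHeartbeats 1000000 in
theorem key (R : Type u) [CommRing R] (x : R)
    (hxR : Function.Injective fun r : R => x * r) :
    ∀ (n : ℕ) (M : Type u) [AddCommGroup M] [Module R M],
      Function.Injective (fun m : M => x • m) →
      AB.IsFP R n (ModuleCat.of R M) →
      AB.IsFP (R ⧸ Ideal.span {x}) n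
        (ModuleCat.of (R ⧸ Ideal.span {x}) (M ⧸ (Ideal.span {x} • ⊤ : Submodule R M)))
  | 0, M, _, _, _, h => by
      simp only [AB.IsFP] at h ⊢
      haveI : Module.Finite R M := h
      exact Module.Finite.of_restrictScalars_finite R (R ⧸ Ideal.span {x})
        (M ⧸ (Ideal.span {x} • ⊤ : Submodule R M))
  | n + 1, M, _, _, hxM, h => by
      simp only [AB.IsFP] at h ⊢
      obtain ⟨k, f, hf, hker⟩ := h
      set I : Ideal R := Ideal.span {x} with hI
      -- the equivalence (Fin k → R⧸I) ≃ (Fin k → R) ⧸ I•⊤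
      have hpi : (I • ⊤ : Submodule R (Fin k → R)) =
          Submodule.pi Set.univ (fun _ : Fin k => (I : Submodule R R)) := by
        apply le_antisymm
        · refine Submodule.smul_le.mpr fun r hr v _ => ?_
          refine Submodule.mem_pi.mpr fun i _ => ?_
          exact I.mul_mem_right (v i) hr
        · intro v hv
          rw [mem_xsmul (x := x)]
          have : ∀ i, x ∣ v i := fun i =>
            Ideal.mem_span_singleton.mp (Submodule.mem_pi.mp hv i trivial)
          choose c hc using this
          exact ⟨c, by funext i; simp [Pi.smul_apply, smul_eq_mul, (hc i).symm]⟩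
      let E0 : ((Fin k → R) ⧸ (I • ⊤ : Submodule R (Fin k → R))) ≃ₗ[R]
          (Fin k → R ⧸ I) :=
        (Submodule.quotEquivOfEq _ _ hpi).trans
          (Submodule.quotientPi (fun _ : Fin k => (I : Submodule R R)))
      let E : ((Fin k → R) ⧸ (I • ⊤ : Submodule R (Fin k → R))) ≃ₗ[R ⧸ I]
          (Fin k → R ⧸ I) :=
        E0.extendScalarsOfSurjective Ideal.Quotient.mk_surjective
      let fbar := barMap (x := x) f
      let g : (Fin k → R ⧸ I) →ₗ[R ⧸ I]
          (M ⧸ (I • ⊤ : Submodule R M)) := fbar.comp E.symm.toLinearMap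
      have hfbarsurj : Function.Surjective fbar := by
        intro y
        obtain ⟨m, rfl⟩ := Submodule.Quotient.mk_surjective _ y
        obtain ⟨a, rfl⟩ := hf m
        exact ⟨Submodule.Quotient.mk a, rfl⟩
      have hgsurj : Function.Surjective g := fun y => by
        obtain ⟨u, hu⟩ := hfbarsurj y
        exact ⟨E u, by simpa [g, LinearMap.comp_apply] using hu⟩
      refine ⟨k, g, hgsurj, ?_⟩
      -- the kernel K of f, with x regular on it
      set K := LinearMap.ker f with hK
      have hxK : Function.Injective fun m : K => x • m := by
        intro a b hab
        ext i
        apply hxR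
        have := congrArg (fun v : K => (v : Fin k → R) i) hab
        simpa [mul_comm] using this
      have hKfp : AB.IsFP (R ⧸ I) n
          (ModuleCat.of (R ⧸ I) (K ⧸ (I • ⊤ : Submodule R K))) :=
        key R x hxR n K hxK hker
      -- φ : K⧸xK → (Fin k → R)⧸x• , the bar of the inclusion
      let φ := barMap (x := x) K.subtype
      have hφinj : Function.Injective φ := by
        rw [← LinearMap.ker_eq_bot]
        refine (Submodule.eq_bot_iff _).mpr fun u hu => ?_
        obtain ⟨a, rfl⟩ := Submodule.Quotient.mk_surjective _ u
        have : (a : Fin k → R) ∈ (I • ⊤ : Submodule R (Fin k → R)) := by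
          simpa [φ, barMap_mk, Submodule.Quotient.mk_eq_zero] using hu
        obtain ⟨v, hv⟩ := (mem_xsmul (x := x) _).mp this
        have hfv : f v = 0 := by
          apply hxM
          show x • f v = x • 0
          rw [smul_zero, ← map_smul, hv]
          exact a.2
        have haK : a = x • (⟨v, hfv⟩ : K) := Subtype.ext hv.symm
        rw [Submodule.Quotient.mk_eq_zero, haK]
        exact (mem_xsmul (x := x) _).mpr ⟨⟨v, hfv⟩, rfl⟩
      have hφrange : LinearMap.range φ = LinearMap.ker fbar := by
        apply le_antisymm
        · rintro _ ⟨u, rfl⟩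
          obtain ⟨a, rfl⟩ := Submodule.Quotient.mk_surjective _ u
          simp only [LinearMap.mem_ker, φ, barMap_mk, fbar]
          rw [Submodule.Quotient.mk_eq_zero]
          have h0 : f (K.subtype a) = 0 := LinearMap.mem_ker.mp a.2
          rw [h0]
          exact Submodule.zero_mem _
        · intro u hu
          obtain ⟨v, rfl⟩ := Submodule.Quotient.mk_surjective _ u
          have : f v ∈ (I • ⊤ : Submodule R M) := by
            simpa [fbar, barMap_mk, Submodule.Quotient.mk_eq_zero] using hu
          obtain ⟨m, hm⟩ := (mem_xsmul (x := x) _).mp this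
          obtain ⟨w, rfl⟩ := hf m
          have hvK : f (v - x • w) = 0 := by
            simp [map_sub, map_smul, hm, sub_eq_zero]
          refine ⟨Submodule.Quotient.mk (⟨v - x • w, hvK⟩ : K), ?_⟩
          simp only [φ, barMap_mk, Submodule.coe_mk]
          rw [Submodule.Quotient.eq]
          refine (mem_xsmul (x := x) _).mpr ⟨-w, ?_⟩
          show x • (-w) = v - x • w - v
          rw [smul_neg]
          abel
      -- assemble the equivalence K⧸xK ≃ ker g
      have hmapE : (LinearMap.ker g).map E.symm.toLinearMap = LinearMap.ker fbar := by
        rw [show LinearMap.ker g = Submodule.comap E.symm.toLinearMap (LinearMap.ker fbar)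
            from LinearMap.ker_comp _ _]
        exact Submodule.map_comap_eq_of_surjective E.symm.surjective _
      let e1 : (K ⧸ (I • ⊤ : Submodule R K)) ≃ₗ[R ⧸ I] LinearMap.range φ :=
        LinearEquiv.ofInjective φ hφinj
      let e2 : (LinearMap.range φ : Submodule (R ⧸ I) _) ≃ₗ[R ⧸ I] LinearMap.ker fbar :=
        LinearEquiv.ofEq _ _ hφrange
      let e3 : (LinearMap.ker g : Submodule (R ⧸ I) _) ≃ₗ[R ⧸ I] LinearMap.ker fbar :=
        LinearEquiv.ofSubmodules E.symm _ _ hmapE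
      exact isFP_congr (R ⧸ I) n (e1.trans (e2.trans e3.symm)) hKfp
end Key

theorem fpInf_quotient_regular_element (R : Type u) [CommRing R] (M : Type u)
    [AddCommGroup M] [Module R M]
    (hM : AB.IsFPInf R (ModuleCat.of R M)) (x : R)
    (hxR : Function.Injective fun r : R => x * r)
    (hxM : Function.Injective fun m : M => x • m) :
    AB.IsFPInf (R ⧸ Ideal.span {x})
      (ModuleCat.of (R ⧸ Ideal.span {x})
        (M ⧸ (Ideal.span {x} • ⊤ : Submodule R M))) := by
  intro n
  exact key R x hxR n M hxM (hM n)
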